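/- arXiv:2410.20169 — 2 statements merged into one kernel-verified Lean document; each statement's English description precedes it below -/
import Mathlib

section
/- Let π(θ) be the scale mixture of normals with beta prime mixing density with parameters a = b = 1/2, i.e. f_{τ²}(t) = t^{−1/2}(1+t)^{−1}/π (equivalently, the half-Cauchy distribution C⁺(0,1) on τ = √t; π(θ) is the horseshoe prior). Then the Gaussian marginal likelihood satisfies, for every y ≠ 0, f(y) = ∫_ℝ f_θ(y) π(θ) dθ = (2/π^{3/2}) |y|^{-1} D(|y|/√(2σ²)), where D(z) = e^{−z²} ∫₀^z e^{t²} dt is the Dawson function. -/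
open MeasureTheory Real Set Filter Topology

/-- Gaussian density with mean `θ` and standard deviation `σ`. -/
noncomputable def gaussPdf (σ θ y : ℝ) : ℝ :=
  (Real.sqrt (2 * Real.pi * σ ^ 2))⁻¹ * Real.exp (-(y - θ) ^ 2 / (2 * σ ^ 2))

/-- Centered Gaussian density with variance `v`: `N(θ; 0, v)`. -/
noncomputable def centeredGaussPdf (v θ : ℝ) : ℝ :=
  (Real.sqrt (2 * Real.pi * v))⁻¹ * Real.exp (-θ ^ 2 / (2 * v))

/-- Scale mixture of normals prior `π(θ) = ∫₀^∞ N(θ; 0, σ²t) f_{τ²}(t) dt`. -/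
noncomputable def mixPrior (σ : ℝ) (fτ : ℝ → ℝ) (θ : ℝ) : ℝ :=
  ∫ t in Ioi (0:ℝ), centeredGaussPdf (σ ^ 2 * t) θ * fτ t

/-- Marginal likelihood `f(y) = ∫ f_θ(y) π(θ) dθ` under the scale mixture prior. -/
noncomputable def mixMarginal (σ : ℝ) (fτ : ℝ → ℝ) (y : ℝ) : ℝ :=
  ∫ θ, gaussPdf σ θ y * mixPrior σ fτ θ

/-- Beta prime mixing density with `a = b = 1/2`: `f_{τ²}(t) = t^{−1/2}(1+t)^{−1}/π`
(the half-Cauchy distribution on `τ = √t`, giving the horseshoe prior). -/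
noncomputable def horseshoeMixPdf (t : ℝ) : ℝ :=
  t ^ (-(1:ℝ)/2) * (1 + t)⁻¹ / Real.pi

/-- The Dawson function `D(z) = e^{−z²} ∫₀^z e^{t²} dt`. -/
noncomputable def dawson (z : ℝ) : ℝ :=
  Real.exp (-z ^ 2) * ∫ t in (0:ℝ)..z, Real.exp (t ^ 2)

lemma conv_pt (σ t θ y : ℝ) (hσ : 0 < σ) (ht : 0 < t) :
    gaussPdf σ θ y * centeredGaussPdf (σ ^ 2 * t) θ =
      centeredGaussPdf (σ ^ 2 * (1 + t)) y *
        ((Real.sqrt (Real.pi / ((1 + t) / (2 * σ ^ 2 * t))))⁻¹ *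
          Real.exp (-((1 + t) / (2 * σ ^ 2 * t)) * (θ - t * y / (1 + t)) ^ 2)) := by
  have hπ := Real.pi_pos
  have h1t : (0:ℝ) < 1 + t := by linarith
  have hσ2 : (0:ℝ) < σ ^ 2 := by positivity
  unfold gaussPdf centeredGaussPdf
  rw [mul_mul_mul_comm, mul_mul_mul_comm ((Real.sqrt (2 * Real.pi * (σ ^ 2 * (1+t))))⁻¹)]
  congr 1
  · rw [← Real.sqrt_inv, ← Real.sqrt_inv, ← Real.sqrt_inv, ← Real.sqrt_inv,
      ← Real.sqrt_mul (by positivity), ← Real.sqrt_mul (by positivity)]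
    congr 1
    field_simp
  · rw [← Real.exp_add, ← Real.exp_add]
    congr 1
    field_simp
    ring

lemma conv_integrable (σ t y : ℝ) (hσ : 0 < σ) (ht : 0 < t) :
    Integrable (fun θ => gaussPdf σ θ y * centeredGaussPdf (σ ^ 2 * t) θ) := by
  have h1t : (0:ℝ) < 1 + t := by linarith
  have hb : (0:ℝ) < (1 + t) / (2 * σ ^ 2 * t) := by positivity
  have : (fun θ => gaussPdf σ θ y * centeredGaussPdf (σ ^ 2 * t) θ) =
      fun θ => (centeredGaussPdf (σ ^ 2 * (1 + t)) y *
        (Real.sqrt (Real.pi / ((1 + t) / (2 * σ ^ 2 * t))))⁻¹) *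
          Real.exp (-((1 + t) / (2 * σ ^ 2 * t)) * (θ - t * y / (1 + t)) ^ 2) := by
    funext θ; rw [conv_pt σ t θ y hσ ht]; ring
  rw [this]
  exact (((integrable_exp_neg_mul_sq hb).comp_sub_right (t * y / (1 + t)))).const_mul _

lemma conv_int (σ t y : ℝ) (hσ : 0 < σ) (ht : 0 < t) :
    ∫ θ, gaussPdf σ θ y * centeredGaussPdf (σ ^ 2 * t) θ =
      centeredGaussPdf (σ ^ 2 * (1 + t)) y := by
  have h1t : (0:ℝ) < 1 + t := by linarith
  have hb : (0:ℝ) < (1 + t) / (2 * σ ^ 2 * t) := by positivity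
  simp_rw [fun θ => conv_pt σ t θ y hσ ht]
  rw [integral_const_mul, integral_const_mul]
  have : ∫ θ, Real.exp (-((1 + t) / (2 * σ ^ 2 * t)) * (θ - t * y / (1 + t)) ^ 2) =
      Real.sqrt (Real.pi / ((1 + t) / (2 * σ ^ 2 * t))) := by
    rw [MeasureTheory.integral_sub_right_eq_self
      (fun θ : ℝ => Real.exp (-((1 + t) / (2 * σ ^ 2 * t)) * θ ^ 2)) (t * y / (1 + t))]
    exact integral_gaussian _
  rw [this, inv_mul_cancel₀ (by positivity : Real.sqrt (Real.pi / ((1 + t) / (2 * σ ^ 2 * t))) ≠ 0), mul_one]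

lemma subst_img : (fun s : ℝ => s ^ 2 / (1 - s ^ 2)) '' Ioo 0 1 = Ioi 0 := by
  ext t
  constructor
  · rintro ⟨s, ⟨hs0, hs1⟩, rfl⟩
    have h1 : 0 < 1 - s ^ 2 := by nlinarith
    exact mem_Ioi.mpr (by positivity)
  · intro ht
    have ht' : (0:ℝ) < t := ht
    have h1t : (0:ℝ) < 1 + t := by linarith
    refine ⟨Real.sqrt (t / (1 + t)), ⟨by positivity, ?_⟩, ?_⟩
    · exact (Real.sqrt_lt' one_pos).mpr (by rw [one_pow, div_lt_one h1t]; linarith)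
    · have hsq : Real.sqrt (t / (1 + t)) ^ 2 = t / (1 + t) := Real.sq_sqrt (by positivity)
      show Real.sqrt (t / (1 + t)) ^ 2 / (1 - Real.sqrt (t / (1 + t)) ^ 2) = t
      rw [hsq]
      field_simp
      ring

lemma subst_deriv : ∀ s ∈ Ioo (0:ℝ) 1, HasDerivWithinAt (fun s : ℝ => s ^ 2 / (1 - s ^ 2))
    (2 * s / (1 - s ^ 2) ^ 2) (Ioo 0 1) s := by
  intro s ⟨hs0, hs1⟩
  have h1 : (1:ℝ) - s ^ 2 ≠ 0 := by nlinarith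
  have := (hasDerivAt_pow 2 s).div ((hasDerivAt_const s (1:ℝ)).sub (hasDerivAt_pow 2 s)) h1
  convert this.hasDerivWithinAt using 1
  · rfl
  · rfl
  · rfl
  · simp
    field_simp
    ring

lemma subst_inj : InjOn (fun s : ℝ => s ^ 2 / (1 - s ^ 2)) (Ioo 0 1) := by
  intro a ⟨ha0, ha1⟩ b ⟨hb0, hb1⟩ h
  have h1a : (1:ℝ) - a ^ 2 > 0 := by nlinarith
  have h1b : (1:ℝ) - b ^ 2 > 0 := by nlinarith
  simp only at h
  rw [div_eq_div_iff (by linarith) (by linarith)] at h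
  nlinarith [sq_nonneg (a - b), sq_nonneg (a + b)]

lemma subst_pt (σ y : ℝ) (hσ : 0 < σ) {s : ℝ} (hs : s ∈ Ioo (0:ℝ) 1) :
    |2 * s / (1 - s ^ 2) ^ 2| •
      (centeredGaussPdf (σ ^ 2 * (1 + s ^ 2 / (1 - s ^ 2))) y *
        horseshoeMixPdf (s ^ 2 / (1 - s ^ 2))) =
      2 / (Real.pi * Real.sqrt (2 * Real.pi * σ ^ 2)) *
        Real.exp (-(y ^ 2 / (2 * σ ^ 2)) * (1 - s ^ 2)) := by
  obtain ⟨hs0, hs1⟩ := hs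
  have hπ := Real.pi_pos
  have h1 : (0:ℝ) < 1 - s ^ 2 := by nlinarith
  have ht : (0:ℝ) < s ^ 2 / (1 - s ^ 2) := by positivity
  have h1t : 1 + s ^ 2 / (1 - s ^ 2) = (1 - s ^ 2)⁻¹ := by field_simp; ring
  have hrpow : (s ^ 2 / (1 - s ^ 2)) ^ (-(1:ℝ)/2) =
      (Real.sqrt (s ^ 2 / (1 - s ^ 2)))⁻¹ := by
    rw [neg_div, Real.rpow_neg ht.le, ← Real.sqrt_eq_rpow]
  have hsqt : Real.sqrt (s ^ 2 / (1 - s ^ 2)) = s / Real.sqrt (1 - s ^ 2) := by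
    rw [Real.sqrt_div (sq_nonneg s), Real.sqrt_sq hs0.le]
  have hvar : 2 * Real.pi * (σ ^ 2 * (1 - s ^ 2)⁻¹) = (2 * Real.pi * σ ^ 2) / (1 - s ^ 2) := by
    ring
  have hsq2 : Real.sqrt ((2 * Real.pi * σ ^ 2) / (1 - s ^ 2)) =
      Real.sqrt (2 * Real.pi * σ ^ 2) / Real.sqrt (1 - s ^ 2) := by
    rw [Real.sqrt_div (by positivity)]
  have hexp : -y ^ 2 / (2 * (σ ^ 2 * (1 - s ^ 2)⁻¹)) = -(y ^ 2 / (2 * σ ^ 2)) * (1 - s ^ 2) := by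
    field_simp
  unfold centeredGaussPdf horseshoeMixPdf
  rw [h1t, hrpow, hsqt, hvar, hsq2, hexp]
  set w := Real.sqrt (1 - s ^ 2) with hwdef
  have hw : w ^ 2 = 1 - s ^ 2 := Real.sq_sqrt h1.le
  have hw0 : (0:ℝ) < w := Real.sqrt_pos.mpr h1
  set S := Real.sqrt (2 * Real.pi * σ ^ 2) with hSdef
  have hS0 : (0:ℝ) < S := Real.sqrt_pos.mpr (by positivity)
  rw [smul_eq_mul, abs_of_pos (by positivity)]
  rw [← hw]
  set E := Real.exp (-(y ^ 2 / (2 * σ ^ 2)) * w ^ 2)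
  field_simp

lemma F_meas (σ y : ℝ) :
    Measurable (Function.uncurry fun θ t =>
      gaussPdf σ θ y * (centeredGaussPdf (σ ^ 2 * t) θ * horseshoeMixPdf t)) := by
  unfold gaussPdf centeredGaussPdf horseshoeMixPdf
  fun_prop

lemma F_nonneg (σ y θ : ℝ) {t : ℝ} (ht : 0 < t) :
    0 ≤ gaussPdf σ θ y * (centeredGaussPdf (σ ^ 2 * t) θ * horseshoeMixPdf t) := by
  unfold gaussPdf centeredGaussPdf horseshoeMixPdf
  positivity

lemma outer_integrableOn (σ y : ℝ) (hσ : 0 < σ) :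
    IntegrableOn (fun t => centeredGaussPdf (σ ^ 2 * (1 + t)) y * horseshoeMixPdf t)
      (Ioi (0:ℝ)) := by
  rw [← subst_img,
    integrableOn_image_iff_integrableOn_abs_deriv_smul measurableSet_Ioo subst_deriv subst_inj]
  have hint : IntegrableOn (fun s : ℝ => 2 / (Real.pi * Real.sqrt (2 * Real.pi * σ ^ 2)) *
      Real.exp (-(y ^ 2 / (2 * σ ^ 2)) * (1 - s ^ 2))) (Ioo (0:ℝ) 1) := by
    apply IntegrableOn.mono_set _ Ioo_subset_Icc_self
    apply Continuous.integrableOn_Icc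
    fun_prop
  exact hint.congr_fun (fun s hs => (subst_pt σ y hσ hs).symm) measurableSet_Ioo

lemma marginal_swap (σ y : ℝ) (hσ : 0 < σ) :
    mixMarginal σ horseshoeMixPdf y =
      ∫ t in Ioi (0:ℝ), centeredGaussPdf (σ ^ 2 * (1 + t)) y * horseshoeMixPdf t := by
  have key : Integrable (Function.uncurry fun θ t =>
      gaussPdf σ θ y * (centeredGaussPdf (σ ^ 2 * t) θ * horseshoeMixPdf t))
      (volume.prod (volume.restrict (Ioi 0))) := by
    rw [integrable_prod_iff' (F_meas σ y).aestronglyMeasurable]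
    constructor
    · rw [ae_restrict_iff' measurableSet_Ioi]
      filter_upwards with t ht
      have := (conv_integrable σ t y hσ ht).mul_const (horseshoeMixPdf t)
      simpa [mul_assoc] using this
    · apply ((outer_integrableOn σ y hσ)).congr
      rw [EventuallyEq, ae_restrict_iff' measurableSet_Ioi]
      filter_upwards with t ht
      have heq : ∀ θ : ℝ, ‖gaussPdf σ θ y * (centeredGaussPdf (σ ^ 2 * t) θ * horseshoeMixPdf t)‖
          = gaussPdf σ θ y * (centeredGaussPdf (σ ^ 2 * t) θ * horseshoeMixPdf t) :=
        fun θ => Real.norm_of_nonneg (F_nonneg σ y θ ht)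
      simp only [Function.uncurry_apply_pair]
      simp_rw [heq, ← mul_assoc]
      rw [integral_mul_const, conv_int σ t y hσ ht]
  unfold mixMarginal mixPrior
  calc (∫ θ, gaussPdf σ θ y * ∫ t in Ioi (0:ℝ), centeredGaussPdf (σ ^ 2 * t) θ * horseshoeMixPdf t)
      = ∫ θ, ∫ t in Ioi (0:ℝ),
          gaussPdf σ θ y * (centeredGaussPdf (σ ^ 2 * t) θ * horseshoeMixPdf t) := by
        congr 1; funext θ; exact (integral_const_mul _ _).symm
    _ = ∫ t in Ioi (0:ℝ), ∫ θ,
          gaussPdf σ θ y * (centeredGaussPdf (σ ^ 2 * t) θ * horseshoeMixPdf t) :=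
        integral_integral_swap key
    _ = ∫ t in Ioi (0:ℝ), centeredGaussPdf (σ ^ 2 * (1 + t)) y * horseshoeMixPdf t := by
        apply setIntegral_congr_fun measurableSet_Ioi
        intro t ht
        simp_rw [← mul_assoc]
        rw [integral_mul_const, conv_int σ t y hσ ht]

lemma outer_value (σ y : ℝ) (hσ : 0 < σ) (hy : y ≠ 0) :
    ∫ t in Ioi (0:ℝ), centeredGaussPdf (σ ^ 2 * (1 + t)) y * horseshoeMixPdf t =
      2 / Real.pi ^ ((3:ℝ)/2) * |y|⁻¹ * dawson (|y| / Real.sqrt (2 * σ ^ 2)) := by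
  have hπ := Real.pi_pos
  have h2σ : (0:ℝ) < 2 * σ ^ 2 := by positivity
  set c : ℝ := y ^ 2 / (2 * σ ^ 2) with hcdef
  set z : ℝ := |y| / Real.sqrt (2 * σ ^ 2) with hzdef
  have hz0 : 0 < z := div_pos (abs_pos.mpr hy) (Real.sqrt_pos.mpr h2σ)
  have hz2 : z ^ 2 = c := by
    rw [hzdef, div_pow, sq_abs, Real.sq_sqrt h2σ.le]
  rw [← subst_img,
    integral_image_eq_integral_abs_deriv_smul measurableSet_Ioo subst_deriv subst_inj,
    setIntegral_congr_fun measurableSet_Ioo (fun s hs => subst_pt σ y hσ hs)]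
  have hptw : ∀ s : ℝ, 2 / (Real.pi * Real.sqrt (2 * Real.pi * σ ^ 2)) *
      Real.exp (-c * (1 - s ^ 2)) =
      (2 / (Real.pi * Real.sqrt (2 * Real.pi * σ ^ 2)) * Real.exp (-c)) *
        Real.exp ((s * z) ^ 2) := by
    intro s
    rw [mul_assoc (2 / (Real.pi * Real.sqrt (2 * Real.pi * σ ^ 2))) (Real.exp (-c))
      (Real.exp ((s * z) ^ 2)), ← Real.exp_add]
    congr 2
    rw [mul_pow, hz2]
    ring
  simp_rw [← hcdef]
  simp_rw [hptw]
  rw [integral_const_mul, ← MeasureTheory.integral_Ioc_eq_integral_Ioo,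
    ← intervalIntegral.integral_of_le zero_le_one,
    intervalIntegral.integral_comp_mul_right (fun w => Real.exp (w ^ 2)) hz0.ne',
    zero_mul, one_mul]
  unfold dawson
  rw [hz2]
  have hsplit : Real.sqrt (2 * Real.pi * σ ^ 2) =
      Real.sqrt Real.pi * Real.sqrt (2 * σ ^ 2) := by
    rw [← Real.sqrt_mul Real.pi_pos.le]
    congr 1
    ring
  have hpow : Real.pi ^ ((3:ℝ)/2) = Real.pi * Real.sqrt Real.pi := by
    rw [show (3:ℝ)/2 = 1 + 1/2 by norm_num, Real.rpow_add hπ, Real.rpow_one,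
      ← Real.sqrt_eq_rpow]
  rw [hsplit, hpow, smul_eq_mul, hzdef]
  have hsπ : Real.sqrt Real.pi ≠ 0 := by positivity
  have hs2 : Real.sqrt (2 * σ ^ 2) ≠ 0 := by positivity
  have hay : |y| ≠ 0 := abs_ne_zero.mpr hy
  field_simp


/-- under the horseshoe prior (beta prime mixing density with `a = b = 1/2`),
the Gaussian marginal likelihood equals `(2/π^{3/2}) |y|⁻¹ D(|y|/√(2σ²))` for `y ≠ 0`. -/
theorem stmt12 (σ : ℝ) (hσ : 0 < σ) (y : ℝ) (hy : y ≠ 0) :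
    mixMarginal σ horseshoeMixPdf y =
      2 / Real.pi ^ ((3:ℝ)/2) * |y|⁻¹ * dawson (|y| / Real.sqrt (2 * σ ^ 2)) := by
  rw [marginal_swap σ y hσ, outer_value σ y hσ hy]
end

section
/- Let π(θ) be the scale mixture of normals with beta prime mixing density with parameters a = 1/2, b = 1, i.e. f_{τ²}(t) = (1/2)(1+t)^{−3/2}. Then the Gaussian marginal likelihood f(y) = ∫_ℝ f_θ(y) π(θ) dθ equals (σ/√(2π)) · (1 − exp(−y²/(2σ²)))/y² for y ≠ 0, and equals 1/(2σ√(2π)) for y = 0. -/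
open MeasureTheory Real Set Filter Topology

/-- Beta prime mixing density with `a = 1/2`, `b = 1`: `f_{τ²}(t) = (1/2)(1+t)^{−3/2}`. -/
noncomputable def gpdMixPdf (t : ℝ) : ℝ :=
  (1/2) * (1 + t) ^ (-(3:ℝ)/2)

/- ### Auxiliary lemmas -/

lemma gauss_int (w m : ℝ) (hw : 0 < w) :
    ∫ θ : ℝ, Real.exp (-(θ - m) ^ 2 / (2 * w)) = Real.sqrt (2 * Real.pi * w) := by
  rw [integral_sub_right_eq_self (μ := volume) (fun x : ℝ => Real.exp (-x ^ 2 / (2 * w))) m]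
  have h1 : ∀ θ : ℝ, Real.exp (-θ ^ 2 / (2 * w)) = Real.exp (-(2*w)⁻¹ * θ ^ 2) := by
    intro θ; congr 1; field_simp
  simp_rw [h1, integral_gaussian]
  congr 1
  field_simp

lemma gauss_integrable (w m : ℝ) (hw : 0 < w) :
    Integrable (fun θ : ℝ => Real.exp (-(θ - m) ^ 2 / (2 * w))) := by
  have h1 : ∀ θ : ℝ, Real.exp (-(θ - m) ^ 2 / (2 * w))
      = Real.exp (-(2*w)⁻¹ * (θ - m) ^ 2) := by
    intro θ; congr 1; field_simp
  simp_rw [h1]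
  exact (integrable_exp_neg_mul_sq (by positivity)).comp_sub_right m

lemma prod_eq (σ : ℝ) (hσ : 0 < σ) (t : ℝ) (ht : 0 < t) (y θ : ℝ) :
    gaussPdf σ θ y * centeredGaussPdf (σ ^ 2 * t) θ =
      centeredGaussPdf (σ ^ 2 * (1 + t)) y *
        ((Real.sqrt (2 * Real.pi * (σ ^ 2 * t / (1 + t))))⁻¹ *
          Real.exp (-(θ - t * y / (1 + t)) ^ 2 / (2 * (σ ^ 2 * t / (1 + t))))) := by
  have h1t : (0:ℝ) < 1 + t := by linarith
  have hpi := Real.pi_pos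
  unfold gaussPdf centeredGaussPdf
  rw [show ((Real.sqrt (2 * Real.pi * σ ^ 2))⁻¹ * Real.exp (-(y - θ) ^ 2 / (2 * σ ^ 2))) *
      ((Real.sqrt (2 * Real.pi * (σ ^ 2 * t)))⁻¹ * Real.exp (-θ ^ 2 / (2 * (σ ^ 2 * t)))) =
      ((Real.sqrt (2 * Real.pi * σ ^ 2))⁻¹ * (Real.sqrt (2 * Real.pi * (σ ^ 2 * t)))⁻¹) *
      (Real.exp (-(y - θ) ^ 2 / (2 * σ ^ 2)) * Real.exp (-θ ^ 2 / (2 * (σ ^ 2 * t)))) by ring]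
  rw [← Real.exp_add]
  rw [show ((Real.sqrt (2 * Real.pi * (σ ^ 2 * (1+t))))⁻¹ * Real.exp (-y ^ 2 / (2 * (σ ^ 2 * (1+t))))) *
      ((Real.sqrt (2 * Real.pi * (σ ^ 2 * t / (1 + t))))⁻¹ *
        Real.exp (-(θ - t * y / (1 + t)) ^ 2 / (2 * (σ ^ 2 * t / (1 + t))))) =
      ((Real.sqrt (2 * Real.pi * (σ ^ 2 * (1+t))))⁻¹ * (Real.sqrt (2 * Real.pi * (σ ^ 2 * t / (1 + t))))⁻¹) *
      (Real.exp (-y ^ 2 / (2 * (σ ^ 2 * (1+t)))) * Real.exp (-(θ - t * y / (1 + t)) ^ 2 / (2 * (σ ^ 2 * t / (1 + t))))) by ring]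
  rw [← Real.exp_add]
  congr 1
  · rw [← mul_inv, ← mul_inv, ← Real.sqrt_mul (by positivity), ← Real.sqrt_mul (by positivity)]
    congr 1
    field_simp
  · congr 1
    field_simp
    ring

lemma inner_integral (σ : ℝ) (hσ : 0 < σ) (t : ℝ) (ht : 0 < t) (y : ℝ) :
    ∫ θ : ℝ, gaussPdf σ θ y * centeredGaussPdf (σ ^ 2 * t) θ =
      centeredGaussPdf (σ ^ 2 * (1 + t)) y := by
  have h1t : (0:ℝ) < 1 + t := by linarith
  have hw : (0:ℝ) < σ ^ 2 * t / (1 + t) := by positivity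
  simp_rw [prod_eq σ hσ t ht y]
  rw [integral_const_mul, integral_const_mul, gauss_int _ _ hw,
    inv_mul_cancel₀ (by positivity), mul_one]

lemma inner_integrable (σ : ℝ) (hσ : 0 < σ) (t : ℝ) (ht : 0 < t) (y : ℝ) :
    Integrable (fun θ : ℝ => gaussPdf σ θ y * centeredGaussPdf (σ ^ 2 * t) θ) := by
  have h1t : (0:ℝ) < 1 + t := by linarith
  have hw : (0:ℝ) < σ ^ 2 * t / (1 + t) := by positivity
  simp_rw [prod_eq σ hσ t ht y]
  exact ((gauss_integrable _ _ hw).const_mul _).const_mul _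

lemma deriv_aux (c t : ℝ) (ht : t ∈ Ici (0:ℝ)) :
    HasDerivAt (fun s : ℝ => c⁻¹ * Real.exp (-(c / (1 + s))))
      (c⁻¹ * (((1+t)^2)⁻¹ * (c * Real.exp (-(c / (1 + t)))))) t := by
  have h1t : (0:ℝ) < 1 + t := by have := ht.out; linarith
  have h0 : HasDerivAt (fun s : ℝ => 1 + s) 1 t := by
    simpa using (hasDerivAt_id t).const_add 1
  have h1 : HasDerivAt (fun s : ℝ => (1 + s)⁻¹) (-1 / (1+t)^2) t := by
    exact h0.inv h1t.ne'
  have h2 : HasDerivAt (fun s : ℝ => -(c / (1 + s))) (c * (1 / (1+t)^2)) t := by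
    simp only [div_eq_mul_inv]
    exact (h1.const_mul c).neg.congr_deriv (by ring)
  have h3 := (h2.exp).const_mul c⁻¹
  exact h3.congr_deriv (by ring)

lemma tendsto_aux (c : ℝ) :
    Tendsto (fun s : ℝ => c⁻¹ * Real.exp (-(c / (1 + s)))) atTop (𝓝 c⁻¹) := by
  have h1 : Tendsto (fun s : ℝ => -(c / (1 + s))) atTop (𝓝 0) := by
    have h2 : Tendsto (fun s : ℝ => (1 + s)⁻¹) atTop (𝓝 0) :=
      tendsto_inv_atTop_zero.comp (tendsto_atTop_add_const_left _ 1 tendsto_id)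
    have := (h2.const_mul c).neg
    simpa [div_eq_mul_inv] using this
  have := ((Real.continuous_exp.tendsto 0).comp h1).const_mul c⁻¹
  simpa using this

lemma deriv_nonneg_aux (c : ℝ) (hc : 0 ≤ c) (x : ℝ) (hx : x ∈ Ioi (0:ℝ)) :
    0 ≤ c⁻¹ * (((1+x)^2)⁻¹ * (c * Real.exp (-(c / (1 + x))))) := by
  have h1x : (0:ℝ) < 1 + x := by have := hx.out; linarith
  have := Real.exp_pos (-(c / (1 + x)))
  have h2 : (0:ℝ) ≤ c⁻¹ := inv_nonneg.2 hc
  positivity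

lemma helper_val0 :
    (∫ t in Ioi (0:ℝ), ((1+t)^2)⁻¹ = 1) ∧
      IntegrableOn (fun t : ℝ => ((1+t)^2)⁻¹) (Ioi (0:ℝ)) := by
  have hd : ∀ x ∈ Ici (0:ℝ), HasDerivAt (fun s : ℝ => -(1 + s)⁻¹) (((1+x)^2)⁻¹) x := by
    intro x hx
    have h1x : (0:ℝ) < 1 + x := by have := hx.out; linarith
    have h0 : HasDerivAt (fun s : ℝ => 1 + s) 1 x := by
      simpa using (hasDerivAt_id x).const_add 1
    have h1 : HasDerivAt (fun s : ℝ => (1 + s)⁻¹) (-1 / (1+x)^2) x := by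
      exact h0.inv h1x.ne'
    exact h1.neg.congr_deriv (by ring)
  have hnn : ∀ x ∈ Ioi (0:ℝ), (0:ℝ) ≤ ((1+x)^2)⁻¹ := by
    intro x hx
    have h1x : (0:ℝ) < 1 + x := by have := hx.out; linarith
    positivity
  have ht : Tendsto (fun s : ℝ => -(1 + s)⁻¹) atTop (𝓝 0) := by
    have h2 : Tendsto (fun s : ℝ => (1 + s)⁻¹) atTop (𝓝 0) :=
      tendsto_inv_atTop_zero.comp (tendsto_atTop_add_const_left _ 1 tendsto_id)
    simpa using h2.neg
  constructor
  · have := integral_Ioi_of_hasDerivAt_of_nonneg' hd hnn ht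
    simpa using this
  · exact integrableOn_Ioi_deriv_of_nonneg' hd hnn ht

lemma helper_int (c : ℝ) (hc : 0 ≤ c) :
    IntegrableOn (fun t : ℝ => ((1+t)^2)⁻¹ * Real.exp (-(c / (1 + t)))) (Ioi 0) := by
  rcases eq_or_lt_of_le hc with rfl | hc'
  · simpa using helper_val0.2
  · have h := integrableOn_Ioi_deriv_of_nonneg'
      (g := fun s : ℝ => c⁻¹ * Real.exp (-(c / (1 + s))))
      (fun x hx => deriv_aux c x hx) (deriv_nonneg_aux c hc) (tendsto_aux c)
    refine IntegrableOn.congr_fun h (fun x hx => ?_) measurableSet_Ioi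
    field_simp [hc'.ne']

lemma helper_val (c : ℝ) (hc : 0 < c) :
    ∫ t in Ioi (0:ℝ), ((1+t)^2)⁻¹ * Real.exp (-(c / (1 + t))) = (1 - Real.exp (-c)) / c := by
  have h := integral_Ioi_of_hasDerivAt_of_nonneg'
    (g := fun s : ℝ => c⁻¹ * Real.exp (-(c / (1 + s))))
    (fun x hx => deriv_aux c x hx) (deriv_nonneg_aux c hc.le) (tendsto_aux c)
  have h2 : ∫ x in Ioi (0:ℝ), c⁻¹ * (((1+x)^2)⁻¹ * (c * Real.exp (-(c / (1 + x)))))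
      = c⁻¹ - c⁻¹ * Real.exp (-(c / (1+0))) := h
  have h3 : ∀ x : ℝ, c⁻¹ * (((1+x)^2)⁻¹ * (c * Real.exp (-(c / (1 + x)))))
      = ((1+x)^2)⁻¹ * Real.exp (-(c / (1 + x))) := by
    intro x; field_simp [hc.ne']
  simp_rw [h3] at h2
  rw [h2, show (1:ℝ)+0 = 1 by norm_num, div_one]
  field_simp

lemma outer_form (σ : ℝ) (hσ : 0 < σ) (y t : ℝ) (ht : t ∈ Ioi (0:ℝ)) :
    centeredGaussPdf (σ ^ 2 * (1 + t)) y * gpdMixPdf t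
      = (Real.sqrt (2 * Real.pi * σ ^ 2))⁻¹ * (1/2) *
        (((1+t)^2)⁻¹ * Real.exp (-(y ^ 2 / (2 * σ ^ 2) / (1 + t)))) := by
  have h1t : (0:ℝ) < 1 + t := by have := ht.out; linarith
  have hpi := Real.pi_pos
  unfold centeredGaussPdf gpdMixPdf
  have hexp : -y ^ 2 / (2 * (σ ^ 2 * (1 + t))) = -(y ^ 2 / (2 * σ ^ 2) / (1 + t)) := by
    field_simp
  rw [hexp]
  have hsq : Real.sqrt (2 * Real.pi * (σ ^ 2 * (1 + t)))
      = Real.sqrt (2 * Real.pi * σ ^ 2) * Real.sqrt (1 + t) := by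
    rw [← Real.sqrt_mul (by positivity)]
    ring_nf
  have hrpow : (1 + t) ^ (-(3:ℝ)/2) = ((1+t)^2)⁻¹ * Real.sqrt (1 + t) := by
    rw [Real.sqrt_eq_rpow, show (-(3:ℝ)/2) = (-2 : ℝ) + 1/2 by norm_num,
      Real.rpow_add h1t, Real.rpow_neg h1t.le,
      show ((2:ℝ) : ℝ) = ((2:ℕ) : ℝ) by norm_num, Real.rpow_natCast]
  rw [hsq, hrpow, mul_inv]
  have hs : Real.sqrt (1 + t) ≠ 0 := by positivity
  field_simp

lemma marginal_eq (σ : ℝ) (hσ : 0 < σ) (y : ℝ) :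
    mixMarginal σ gpdMixPdf y =
      (Real.sqrt (2 * Real.pi * σ ^ 2))⁻¹ * (1/2) *
        ∫ t in Ioi (0:ℝ), ((1+t)^2)⁻¹ * Real.exp (-(y ^ 2 / (2 * σ ^ 2) / (1 + t))) := by
  have hpi := Real.pi_pos
  set ν := volume.restrict (Ioi (0:ℝ)) with hν
  set F : ℝ → ℝ → ℝ :=
    fun θ t => gaussPdf σ θ y * (centeredGaussPdf (σ ^ 2 * t) θ * gpdMixPdf t) with hF
  have hc : (0:ℝ) ≤ y ^ 2 / (2 * σ ^ 2) := by positivity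
  -- nonnegativity
  have hFnn : ∀ t ∈ Ioi (0:ℝ), ∀ θ : ℝ, 0 ≤ F θ t := by
    intro t ht θ
    have h1t : (0:ℝ) < 1 + t := by have := ht.out; linarith
    have e1 : (0:ℝ) ≤ gaussPdf σ θ y :=
      mul_nonneg (inv_nonneg.2 (Real.sqrt_nonneg _)) (Real.exp_pos _).le
    have e2 : (0:ℝ) ≤ centeredGaussPdf (σ ^ 2 * t) θ :=
      mul_nonneg (inv_nonneg.2 (Real.sqrt_nonneg _)) (Real.exp_pos _).le
    have e3 : (0:ℝ) ≤ gpdMixPdf t :=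
      mul_nonneg (by norm_num) (Real.rpow_nonneg h1t.le _)
    exact mul_nonneg e1 (mul_nonneg e2 e3)
  -- inner integral for t > 0
  have hInner : ∀ t ∈ Ioi (0:ℝ),
      ∫ θ : ℝ, F θ t = centeredGaussPdf (σ ^ 2 * (1 + t)) y * gpdMixPdf t := by
    intro t ht
    have := inner_integral σ hσ t ht.out y
    calc ∫ θ : ℝ, F θ t
        = ∫ θ : ℝ, (gaussPdf σ θ y * centeredGaussPdf (σ ^ 2 * t) θ) * gpdMixPdf t := by
          simp_rw [hF, mul_assoc]
      _ = (∫ θ : ℝ, gaussPdf σ θ y * centeredGaussPdf (σ ^ 2 * t) θ) * gpdMixPdf t := by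
          rw [integral_mul_const]
      _ = centeredGaussPdf (σ ^ 2 * (1 + t)) y * gpdMixPdf t := by rw [this]
  -- integrability of the marginal-in-t function
  have hg : IntegrableOn
      (fun t : ℝ => (Real.sqrt (2 * Real.pi * σ ^ 2))⁻¹ * (1/2) *
        (((1+t)^2)⁻¹ * Real.exp (-(y ^ 2 / (2 * σ ^ 2) / (1 + t))))) (Ioi 0) :=
    (helper_int _ hc).const_mul _
  -- integrability for fixed t > 0
  have hInt1 : ∀ t ∈ Ioi (0:ℝ), Integrable (fun θ : ℝ => F θ t) := by
    intro t ht
    have := (inner_integrable σ hσ t ht.out y).mul_const (gpdMixPdf t)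
    simpa [hF, mul_assoc] using this
  -- joint measurability
  have hmeas : AEStronglyMeasurable (Function.uncurry F) (volume.prod ν) := by
    apply Measurable.aestronglyMeasurable
    unfold F
    unfold Function.uncurry gaussPdf centeredGaussPdf gpdMixPdf
    fun_prop
  -- joint integrability
  have hjoint : Integrable (Function.uncurry F) (volume.prod ν) := by
    rw [integrable_prod_iff' hmeas]
    constructor
    · rw [hν, ae_restrict_iff' measurableSet_Ioi]
      exact Eventually.of_forall (fun t ht => hInt1 t ht)
    · apply hg.congr_fun_ae
      rw [EventuallyEq, ae_restrict_iff' measurableSet_Ioi]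
      refine Eventually.of_forall (fun t ht => ?_)
      have h1 : ∀ θ : ℝ, ‖F θ t‖ = F θ t := fun θ => Real.norm_of_nonneg (hFnn t ht θ)
      simp only [Function.uncurry]
      rw [show (∫ θ : ℝ, ‖F θ t‖) = ∫ θ : ℝ, F θ t from by simp_rw [h1]]
      rw [hInner t ht, outer_form σ hσ y t ht]
  -- Fubini
  have hswap : mixMarginal σ gpdMixPdf y = ∫ t in Ioi (0:ℝ), ∫ θ : ℝ, F θ t := by
    unfold mixMarginal mixPrior
    have : ∀ θ : ℝ, gaussPdf σ θ y * ∫ t in Ioi (0:ℝ), centeredGaussPdf (σ ^ 2 * t) θ * gpdMixPdf t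
        = ∫ t in Ioi (0:ℝ), F θ t := by
      intro θ
      rw [← integral_const_mul]
    simp_rw [this]
    exact integral_integral_swap hjoint
  rw [hswap, ← integral_const_mul]
  refine setIntegral_congr_fun measurableSet_Ioi (fun t ht => ?_)
  rw [hInner t ht, outer_form σ hσ y t ht]

theorem stmt13 (σ : ℝ) (hσ : 0 < σ) :
    (∀ y : ℝ, y ≠ 0 →
      mixMarginal σ gpdMixPdf y =
        σ / Real.sqrt (2 * Real.pi) * (1 - Real.exp (-y ^ 2 / (2 * σ ^ 2))) / y ^ 2) ∧
    mixMarginal σ gpdMixPdf 0 = 1 / (2 * σ * Real.sqrt (2 * Real.pi)) := by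
  have hpi := Real.pi_pos
  have hsq : Real.sqrt (2 * Real.pi * σ ^ 2) = Real.sqrt (2 * Real.pi) * σ := by
    rw [Real.sqrt_mul (by positivity), Real.sqrt_sq hσ.le]
  have hs2 : Real.sqrt (2 * Real.pi) ≠ 0 := by positivity
  constructor
  · intro y hy
    have hc : (0:ℝ) < y ^ 2 / (2 * σ ^ 2) := by positivity
    rw [marginal_eq σ hσ y, helper_val _ hc, hsq]
    rw [show -y ^ 2 / (2 * σ ^ 2) = -(y ^ 2 / (2 * σ ^ 2)) by rw [neg_div]]
    field_simp
  · rw [marginal_eq σ hσ 0]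
    simp only [ne_eq, OfNat.ofNat_ne_zero, not_false_eq_true, zero_pow, zero_div, neg_zero,
      Real.exp_zero, mul_one]
    rw [helper_val0.1, hsq]
    field_simp
end
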